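/- arXiv:2103.10871 — 2 statements merged into one kernel-verified Lean document; each statement's English description precedes it below -/
import Mathlib

section
/- The graph H_2 is 4-χρ-vertex-critical; that is, χρ(H_2) = 4 and χρ(H_2 − v) < 4 for every vertex v of H_2. -/
set_option maxRecDepth 100000

open SimpleGraph

/-- A `k`-packing coloring of `G`: colors in `{1,…,k}` and distinct vertices of equal color `i`
are at (extended, shortest-path) distance greater than `i`. -/
def IsPackingColoring {V : Type*} (G : SimpleGraph V) (k : ℕ) (c : V → ℕ) : Prop :=
  (∀ v, 1 ≤ c v ∧ c v ≤ k) ∧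
    ∀ u v : V, u ≠ v → c u = c v → (c u : ℕ∞) < G.edist u v

/-- The packing chromatic number of `G`: the least `k` admitting a `k`-packing coloring. -/
noncomputable def packingChromaticNumber {V : Type*} (G : SimpleGraph V) : ℕ :=
  sInf {k | ∃ c : V → ℕ, IsPackingColoring G k c}

/-- `G` is `4`-`χρ`-vertex-critical: `χρ(G) = 4` and deleting any vertex drops `χρ` below `4`. -/
def FourVertexCritical {V : Type*} (G : SimpleGraph V) : Prop :=
  packingChromaticNumber G = 4 ∧
    ∀ v : V, packingChromaticNumber (G.induce ({v}ᶜ : Set V)) < 4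

/-- `G` contains a (not necessarily induced) subgraph isomorphic to `H`. -/
def HasCopy {W V : Type*} (H : SimpleGraph W) (G : SimpleGraph V) : Prop :=
  ∃ f : H →g G, Function.Injective f

/-- The cycle on `n` vertices (for `n ≥ 3`). -/
def CycGraph (n : ℕ) : SimpleGraph (Fin n) :=
  SimpleGraph.fromRel (fun i j => (i.val + 1) % n = j.val)

/-- `H₂`: vertices `a=0, b=1, c=2, d=3, e=4`; edges `ab, ae, be, bc, bd, cd`. -/
def H2graph : SimpleGraph (Fin 5) :=
  SimpleGraph.fromRel (fun i j =>
    (i.val = 0 ∧ j.val = 1) ∨ (i.val = 0 ∧ j.val = 4) ∨ (i.val = 1 ∧ j.val = 4) ∨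
      (i.val = 1 ∧ j.val = 2) ∨ (i.val = 1 ∧ j.val = 3) ∨ (i.val = 2 ∧ j.val = 3))

instance : DecidableRel H2graph.Adj := fun u v => by
  unfold H2graph; rw [SimpleGraph.fromRel_adj]; infer_instance

lemma one_lt_edist {V : Type*} {G : SimpleGraph V} {u v : V} (hne : u ≠ v)
    (h : ¬ G.Adj u v) : 1 < G.edist u v :=
  lt_of_le_of_ne (Order.one_le_iff_pos.mpr (G.edist_pos_of_ne hne))
    (fun e => h (edist_eq_one_iff_adj.mp e.symm))

lemma walk_invar {V : Type*} {G : SimpleGraph V} (P : V → Prop)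
    (hP : ∀ x y, G.Adj x y → P x → P y) :
    ∀ {u v : V}, G.Walk u v → P u → P v := by
  intro u v p
  induction p with
  | nil => exact id
  | cons h _ ih => exact fun hu => ih (hP _ _ h hu)

lemma H2_edist_le_two : ∀ u v : Fin 5, u ≠ v → H2graph.edist u v ≤ 2 := by
  intro u v hne
  rcases (show H2graph.Adj u v ∨ (H2graph.Adj u 1 ∧ H2graph.Adj 1 v) by
      revert hne; revert u v; decide) with h | ⟨h1, h2⟩
  · calc H2graph.edist u v ≤ (h.toWalk.length : ℕ∞) := edist_le _
      _ ≤ 2 := by simp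
  · calc H2graph.edist u v ≤ ((h1.toWalk.append h2.toWalk).length : ℕ∞) := edist_le _
      _ ≤ 2 := by simp [SimpleGraph.Walk.length_append]

lemma H2_no_three (c : Fin 5 → ℕ) : ¬ IsPackingColoring H2graph 3 c := by
  rintro ⟨hb, hp⟩
  obtain ⟨u, v, hne, heq, hadj⟩ :=
    (show ∀ d : Fin 5 → Fin 3, ∃ u v, u ≠ v ∧ d u = d v ∧ (d u = 0 → H2graph.Adj u v) by
      decide) (fun v => ⟨c v - 1, by have := hb v; omega⟩)
  have hval := congrArg Fin.val heq
  simp only at hval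
  have hcuv : c u = c v := by have h1 := hb u; have h2 := hb v; omega
  have hlt := hp u v hne hcuv
  by_cases h0 : c u = 1
  · have hA := hadj (by ext; simp; omega)
    rw [SimpleGraph.edist_eq_one_iff_adj.mpr hA, h0] at hlt
    simp at hlt
  · have h2c : 2 ≤ c u := by have := hb u; omega
    have hle2 := H2_edist_le_two u v hne
    have : ((2:ℕ):ℕ∞) ≤ (c u : ℕ∞) := by exact_mod_cast h2c
    exact absurd (lt_of_lt_of_le hlt hle2) (not_lt.mpr (by exact_mod_cast h2c))

lemma packing_mono {V : Type*} {G : SimpleGraph V} {k k' : ℕ} (h : k ≤ k') {c : V → ℕ}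
    (hc : IsPackingColoring G k c) : IsPackingColoring G k' c :=
  ⟨fun v => ⟨(hc.1 v).1, le_trans (hc.1 v).2 h⟩, hc.2⟩

/-- Valid 3-packing colorings of vertex-deleted subgraphs, pattern where only color 1 repeats. -/
lemma induce_packing3 (v0 : Fin 5) (f : Fin 5 → ℕ)
    (h : ∀ x y : Fin 5, x ≠ v0 → y ≠ v0 →
        (1 ≤ f x ∧ f x ≤ 3) ∧ (x ≠ y → f x = f y → ¬ H2graph.Adj x y ∧ f x = 1)) :
    IsPackingColoring (H2graph.induce ({v0}ᶜ : Set (Fin 5))) 3 (fun x => f x.val) := by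
  constructor
  · rintro ⟨x, hx⟩
    exact (h x x (by simpa using hx) (by simpa using hx)).1
  · rintro ⟨x, hx⟩ ⟨y, hy⟩ hne heq
    have hxy : x ≠ y := fun e => hne (Subtype.ext e)
    obtain ⟨hna, h1⟩ := (h x y (by simpa using hx) (by simpa using hy)).2 hxy heq
    have hnadj : ¬ (H2graph.induce ({v0}ᶜ : Set (Fin 5))).Adj ⟨x, hx⟩ ⟨y, hy⟩ := by
      simpa using hna
    have : ((f x : ℕ) : ℕ∞) = 1 := by rw [h1]; norm_cast
    simpa [this] using one_lt_edist hne hnadj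

lemma del_b : ∃ c : ({(1:Fin 5)}ᶜ : Set (Fin 5)) → ℕ,
    IsPackingColoring (H2graph.induce ({(1:Fin 5)}ᶜ : Set (Fin 5))) 3 c := by
  refine ⟨fun x => (![1, 1, 1, 2, 2] : Fin 5 → ℕ) x.val, ⟨?_, ?_⟩⟩
  · rintro ⟨x, hx⟩; fin_cases x <;> simp
  · rintro ⟨x, hx⟩ ⟨y, hy⟩ hne heq
    have hxy : x ≠ y := fun e => hne (Subtype.ext e)
    have hx1 : x ≠ 1 := by simpa using hx
    have hy1 : y ≠ 1 := by simpa using hy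
    rcases (show ∀ x y : Fin 5, x ≠ 1 → y ≠ 1 → x ≠ y →
        (![1,1,1,2,2] : Fin 5 → ℕ) x = ![1,1,1,2,2] y →
        ((![1,1,1,2,2] : Fin 5 → ℕ) x = 1 ∧ ¬ H2graph.Adj x y) ∨
        ((![1,1,1,2,2] : Fin 5 → ℕ) x = 2 ∧ ¬((x = 3 ∨ x = 2) ↔ (y = 3 ∨ y = 2))) by
        decide) x y hx1 hy1 hxy heq with ⟨h1, hna⟩ | ⟨h2, hiff⟩
    · have hnadj : ¬ (H2graph.induce ({(1:Fin 5)}ᶜ : Set (Fin 5))).Adj ⟨x, hx⟩ ⟨y, hy⟩ := by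
        simpa using hna
      have : (((![1,1,1,2,2] : Fin 5 → ℕ) x : ℕ) : ℕ∞) = 1 := by rw [h1]; norm_cast
      simpa [this] using one_lt_edist hne hnadj
    · have hreach : ¬ (H2graph.induce ({(1:Fin 5)}ᶜ : Set (Fin 5))).Reachable ⟨x, hx⟩ ⟨y, hy⟩ := by
        rintro ⟨p⟩
        have key := walk_invar (fun z => ((z.val = 3 ∨ z.val = 2) ↔ (x = 3 ∨ x = 2)))
          ?_ p Iff.rfl
        · exact hiff key.symm
        · rintro ⟨a, ha⟩ ⟨b, hb⟩ hab hpa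
          have hab' : H2graph.Adj a b := by simpa using hab
          have ha1 : a ≠ 1 := by simpa using ha
          have hb1 : b ≠ 1 := by simpa using hb
          exact ((show ∀ a b : Fin 5, H2graph.Adj a b → a ≠ 1 → b ≠ 1 →
              ((a = 3 ∨ a = 2) ↔ (b = 3 ∨ b = 2)) by decide) a b hab' ha1 hb1).symm.trans hpa
      have : (H2graph.induce ({(1:Fin 5)}ᶜ : Set (Fin 5))).edist ⟨x, hx⟩ ⟨y, hy⟩ = ⊤ :=
        SimpleGraph.edist_eq_top_of_not_reachable hreach
      simp only [this]
      exact (ENat.coe_lt_top _)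

theorem H2_fourVertexCritical : FourVertexCritical H2graph := by
  constructor
  · -- χρ(H2) = 4
    have h4 : (4 : ℕ) ∈ {k | ∃ c : Fin 5 → ℕ, IsPackingColoring H2graph k c} := by
      refine ⟨![1, 4, 1, 3, 2], ⟨by decide, ?_⟩⟩
      intro u v hne heq
      obtain ⟨hna, h1⟩ :=
        (show ∀ u v : Fin 5, u ≠ v → (![1,4,1,3,2] : Fin 5 → ℕ) u = ![1,4,1,3,2] v →
            ¬ H2graph.Adj u v ∧ (![1,4,1,3,2] : Fin 5 → ℕ) u = 1 by decide) u v hne heq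
      have : (((![1,4,1,3,2] : Fin 5 → ℕ) u : ℕ) : ℕ∞) = 1 := by rw [h1]; norm_cast
      simpa [this] using one_lt_edist hne hna
    refine le_antisymm (Nat.sInf_le h4) (le_csInf ⟨4, h4⟩ ?_)
    rintro k ⟨c, hc⟩
    by_contra hlt
    exact H2_no_three c (packing_mono (by omega) hc)
  · intro v
    have h3 : ∃ c : ({v}ᶜ : Set (Fin 5)) → ℕ,
        IsPackingColoring (H2graph.induce ({v}ᶜ : Set (Fin 5))) 3 c := by
      fin_cases v
      · exact ⟨_, induce_packing3 0 ![1, 2, 1, 3, 1] (by decide)⟩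
      · exact del_b
      · exact ⟨_, induce_packing3 2 ![1, 3, 1, 1, 2] (by decide)⟩
      · exact ⟨_, induce_packing3 3 ![1, 3, 1, 1, 2] (by decide)⟩
      · exact ⟨_, induce_packing3 4 ![1, 2, 1, 3, 1] (by decide)⟩
    exact lt_of_le_of_lt (Nat.sInf_le h3) (by norm_num)
end

section
/- The graph H_8 is 4-χρ-vertex-critical; that is, χρ(H_8) = 4 and χρ(H_8 − v) < 4 for every vertex v of H_8. -/
open SimpleGraph

/-- `H₈`: the 8-cycle `b(0)-c(1)-d(2)-e(3)-g(4)-h(5)-i(6)-j(7)-b(0)`, a pendant vertex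
`a(8)` adjacent to `b=0`, a pendant vertex `f(9)` adjacent to `e=3`, plus the edge
`a(8)-i(6)`. -/
def H8graph : SimpleGraph (Fin 10) :=
  SimpleGraph.fromRel (fun i j =>
    (j.val = i.val + 1 ∧ j.val ≤ 7) ∨ (i.val = 0 ∧ j.val = 7) ∨
      (i.val = 0 ∧ j.val = 8) ∨ (i.val = 3 ∧ j.val = 9) ∨ (i.val = 6 ∧ j.val = 8))

/-!
An explicit `4`-packing coloring gives `χρ(H₈) ≤ 4`, and for each vertex `v` an explicit
`3`-packing coloring of `H₈ - v` gives `χρ(H₈ - v) ≤ 3`. The lower bound `χρ(H₈) ≥ 4` is an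
exhaustive backtracking search over `3`-colorings of the vertices in order, rejecting a color as
soon as it repeats within its own distance. All of this runs on a table of the distances of `H₈`,
which is certified once: a table that vanishes on the diagonal, is `1`-Lipschitz along edges and
drops by one along some edge into every other vertex is the graph distance.
-/

namespace SimpleGraph

variable {V W : Type*} {G : SimpleGraph V}

theorem Hom.edist_le {G' : SimpleGraph W} (f : G →g G') (u v : V) :
    G'.edist (f u) (f v) ≤ G.edist u v := by
  rcases eq_or_ne (G.edist u v) ⊤ with h | h
  · simp [h]
  · obtain ⟨p, hp⟩ := exists_walk_of_edist_ne_top h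
    calc G'.edist (f u) (f v) ≤ (p.map f).length := SimpleGraph.edist_le _
      _ = G.edist u v := by rw [Walk.length_map, hp]

theorem edist_le_edist_induce (s : Set V) (u v : s) :
    G.edist u v ≤ (G.induce s).edist u v :=
  (Embedding.induce s).toHom.edist_le u v

theorem coe_le_edist_of_forall_adj {D : V → V → ℕ} {u : V} (hu : D u u = 0)
    (hD : ∀ a b, G.Adj a b → D u b ≤ D u a + 1) (v : V) : (D u v : ℕ∞) ≤ G.edist u v := by
  have walk_bound : ∀ {x y : V} (p : G.Walk x y), D u y ≤ D u x + p.length := by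
    intro x y p
    induction p with
    | nil => simp
    | cons h _ ih => have := hD _ _ h; rw [Walk.length_cons]; omega
  refine le_sInf ?_
  rintro _ ⟨p, rfl⟩
  have := walk_bound p
  show (D u v : ℕ∞) ≤ p.length
  exact_mod_cast (by omega : D u v ≤ p.length)

theorem edist_le_coe_of_exists_adj {D : V → V → ℕ} {u : V}
    (hD : ∀ v, v ≠ u → ∃ y, G.Adj y v ∧ D u y + 1 = D u v) (v : V) :
    G.edist u v ≤ D u v := by
  induction hn : D u v using Nat.strong_induction_on generalizing v with
  | _ n ih =>
    rcases eq_or_ne v u with rfl | hvu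
    · simp
    obtain ⟨y, hy, hDy⟩ := hD v hvu
    calc G.edist u v ≤ G.edist u y + G.edist y v := G.edist_triangle
      _ = G.edist u y + 1 := by rw [edist_eq_one_iff_adj.mpr hy]
      _ ≤ (D u y : ℕ∞) + 1 := by gcongr; exact ih _ (by omega) y rfl
      _ = n := by rw [← hn, ← hDy]; push_cast; rfl

theorem edist_eq_of_certificate {D : V → V → ℕ} (hdiag : ∀ u, D u u = 0)
    (hlip : ∀ u a b, G.Adj a b → D u b ≤ D u a + 1)
    (hdesc : ∀ u v, v ≠ u → ∃ y, G.Adj y v ∧ D u y + 1 = D u v) (u v : V) :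
    G.edist u v = D u v :=
  le_antisymm (edist_le_coe_of_exists_adj (hdesc u) v)
    (coe_le_edist_of_forall_adj (hdiag u) (hlip u) v)

end SimpleGraph

open SimpleGraph

section PackingColoring

variable {V : Type*} {G : SimpleGraph V}

theorem IsPackingColoring.mono {k l : ℕ} {c : V → ℕ} (h : IsPackingColoring G k c)
    (hkl : k ≤ l) : IsPackingColoring G l c :=
  ⟨fun v => ⟨(h.1 v).1, (h.1 v).2.trans hkl⟩, h.2⟩

theorem packingChromaticNumber_le {k : ℕ} {c : V → ℕ} (h : IsPackingColoring G k c) :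
    packingChromaticNumber G ≤ k :=
  Nat.sInf_le ⟨c, h⟩

theorem packingChromaticNumber_eq_succ {k : ℕ} {c : V → ℕ}
    (h : IsPackingColoring G (k + 1) c) (hk : ∀ c, ¬IsPackingColoring G k c) :
    packingChromaticNumber G = k + 1 := by
  refine (packingChromaticNumber_le h).antisymm (Nat.succ_le_of_lt ?_)
  by_contra! hle
  obtain ⟨c', hc'⟩ :=
    Nat.sInf_mem (⟨k + 1, c, h⟩ : {k | ∃ c : V → ℕ, IsPackingColoring G k c}.Nonempty)
  exact hk c' (hc'.mono hle)

theorem isPackingColoring_induce {k : ℕ} (s : Set V) {c : V → ℕ}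
    (hc : ∀ v ∈ s, 1 ≤ c v ∧ c v ≤ k)
    (hdist : ∀ u ∈ s, ∀ v ∈ s, u ≠ v → c u = c v → (c u : ℕ∞) < G.edist u v) :
    IsPackingColoring (G.induce s) k (fun v => c v) :=
  ⟨fun v => hc v v.2, fun u v huv heq =>
    (hdist u u.2 v v.2 (Subtype.coe_injective.ne huv) heq).trans_le (edist_le_edist_induce s u v)⟩

end PackingColoring

section Search

variable (D : ℕ → ℕ → ℕ)

/-- `l` lists the colors of the vertices `0, 1, …, l.length - 1`, and `D` is a distance table. -/
def IsPackingList (l : List ℕ) : Prop :=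
  ∀ i (hi : i < l.length) j (hj : j < i), l[j] = l[i] → l[i] < D j i

def IsFreshColor (l : List ℕ) (x : ℕ) : Prop :=
  ∀ j (_ : j < l.length), l[j] = x → x < D j l.length

instance (l : List ℕ) : DecidablePred (IsFreshColor D l) := fun _ =>
  inferInstanceAs (Decidable (∀ j (_ : j < l.length), _))

def noPackingExtension (k : ℕ) : ℕ → List ℕ → Bool
  | 0, _ => false
  | n + 1, l => (List.range' 1 k).all fun x =>
      !decide (IsFreshColor D l x) || noPackingExtension k n (l ++ [x])

variable {D}

theorem IsPackingList.isFreshColor {l xs : List ℕ} {x : ℕ}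
    (h : IsPackingList D (l ++ x :: xs)) : IsFreshColor D l x := by
  intro j hj hjx
  have := h l.length (by simp) j hj
  simp only [List.getElem_append_left hj, List.getElem_append_right (Nat.le_refl _),
    Nat.sub_self, List.getElem_cons_zero] at this
  exact this hjx

theorem not_isPackingList_of_noPackingExtension {k n : ℕ} {l : List ℕ}
    (h : noPackingExtension D k n l = true) (xs : List ℕ) (hlen : xs.length = n)
    (hxs : ∀ x ∈ xs, 1 ≤ x ∧ x ≤ k) : ¬IsPackingList D (l ++ xs) := by
  induction xs generalizing n l with
  | nil => subst hlen; simp [noPackingExtension] at h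
  | cons x xs ih =>
    subst hlen
    intro hl
    have hx : x ∈ List.range' 1 k := by
      rw [List.mem_range'_1]; have := hxs x List.mem_cons_self; omega
    have hnext := List.all_eq_true.mp h x hx
    simp only [hl.isFreshColor, decide_true, Bool.not_true, Bool.false_or] at hnext
    exact ih hnext rfl (fun y hy => hxs y (List.mem_cons_of_mem x hy)) (by simpa using hl)

theorem IsPackingColoring.isPackingList_ofFn {n k : ℕ} {G : SimpleGraph (Fin n)} {c : Fin n → ℕ}
    (hc : IsPackingColoring G k c) (hD : ∀ u v : Fin n, G.edist u v ≤ D u v) :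
    IsPackingList D (List.ofFn c) := by
  intro i hi j hj hji
  simp only [List.length_ofFn] at hi
  simp only [List.getElem_ofFn] at hji ⊢
  have := (hc.2 ⟨j, hj.trans hi⟩ ⟨i, hi⟩ (by simp [Fin.ext_iff, hj.ne]) hji).trans_le (hD _ _)
  rw [← hji]
  exact_mod_cast this

theorem not_isPackingColoring_of_noPackingExtension {n k : ℕ} {G : SimpleGraph (Fin n)}
    (hD : ∀ u v : Fin n, G.edist u v ≤ D u v) (h : noPackingExtension D k n [] = true)
    (c : Fin n → ℕ) : ¬IsPackingColoring G k c := fun hc =>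
  not_isPackingList_of_noPackingExtension h (List.ofFn c) (by simp)
    (by simpa using fun i => hc.1 i) (hc.isPackingList_ofFn hD)

end Search

namespace H8graph

instance : DecidableRel H8graph.Adj := fun _ _ => decidable_of_iff' _ (fromRel_adj _ _ _)

def distRows : List (List ℕ) :=
  [[0, 1, 2, 3, 4, 3, 2, 1, 1, 4],
   [1, 0, 1, 2, 3, 4, 3, 2, 2, 3],
   [2, 1, 0, 1, 2, 3, 4, 3, 3, 2],
   [3, 2, 1, 0, 1, 2, 3, 4, 4, 1],
   [4, 3, 2, 1, 0, 1, 2, 3, 3, 2],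
   [3, 4, 3, 2, 1, 0, 1, 2, 2, 3],
   [2, 3, 4, 3, 2, 1, 0, 1, 1, 4],
   [1, 2, 3, 4, 3, 2, 1, 0, 2, 5],
   [1, 2, 3, 4, 3, 2, 1, 2, 0, 5],
   [4, 3, 2, 1, 2, 3, 4, 5, 5, 0]]

def distTable (u v : ℕ) : ℕ := (distRows.getD u []).getD v 0

theorem edist_eq (u v : Fin 10) : H8graph.edist u v = distTable u v :=
  edist_eq_of_certificate (D := fun u v : Fin 10 => distTable u v)
    (by decide) (by decide) (by decide) u v

def packingColoring : Fin 10 → ℕ := ![1, 2, 1, 3, 1, 2, 1, 3, 4, 1]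

theorem isPackingColoring_packingColoring : IsPackingColoring H8graph 4 packingColoring := by
  refine ⟨by decide, fun u v huv h => ?_⟩
  rw [edist_eq, Nat.cast_lt]
  revert u v
  decide

theorem not_isPackingColoring_three (c : Fin 10 → ℕ) : ¬IsPackingColoring H8graph 3 c :=
  not_isPackingColoring_of_noPackingExtension (fun u v => (edist_eq u v).le) (by decide) c

def deletedColoring : Fin 10 → Fin 10 → ℕ :=
  ![![1, 3, 1, 2, 1, 3, 2, 1, 1, 1],
    ![3, 1, 1, 2, 3, 1, 2, 1, 1, 1],
    ![2, 1, 1, 1, 2, 1, 3, 1, 1, 3],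
    ![2, 1, 3, 1, 1, 2, 3, 1, 1, 1],
    ![2, 1, 3, 1, 1, 1, 3, 1, 1, 2],
    ![2, 1, 3, 2, 1, 1, 3, 1, 1, 1],
    ![2, 3, 1, 2, 1, 3, 1, 1, 1, 1],
    ![1, 2, 1, 3, 1, 2, 1, 1, 3, 1],
    ![1, 2, 1, 3, 1, 2, 1, 3, 1, 1],
    ![2, 1, 3, 1, 2, 1, 3, 1, 1, 1]]

theorem isPackingColoring_deletedColoring (v : Fin 10) :
    IsPackingColoring (H8graph.induce {v}ᶜ) 3 (fun u => deletedColoring v u) := by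
  refine isPackingColoring_induce _ (by revert v; decide) fun u hu w hw huw h => ?_
  rw [edist_eq, Nat.cast_lt]
  revert v u w
  decide

end H8graph

theorem H8_fourVertexCritical : FourVertexCritical H8graph :=
  ⟨packingChromaticNumber_eq_succ H8graph.isPackingColoring_packingColoring
      H8graph.not_isPackingColoring_three,
    fun v => (packingChromaticNumber_le (H8graph.isPackingColoring_deletedColoring v)).trans_lt
      (by norm_num)⟩
end
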